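/- arXiv:1003.3138 — 4 statements merged into one kernel-verified Lean document; each statement's English description precedes it below -/
import Mathlib

section
/- If the 𝓔-measurable quasi-probability kernel π is adapted, then J_𝓔(π) = J_⋆(π). -/
open MeasureTheory
open scoped ENNReal

variable {X : Type*}

/-- A quasi-probability kernel on `(X, mX)`: `π(·,F)` is `mX`-measurable for each
`mX`-measurable `F`, and each `π(x,·)` is a measure with total mass `0` or `1`. -/
def IsQPK (mX : MeasurableSpace X) (π : X → @Measure X mX) : Prop :=
  (∀ F : Set X, MeasurableSet[mX] F → Measurable[mX] fun x => π x F) ∧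
    (∀ x : X, π x Set.univ = 0 ∨ π x Set.univ = 1)

/-- The support `S_π = {x : π(x,X) = 1}` of a quasi-probability kernel. -/
def qpkSupp (mX : MeasurableSpace X) (π : X → @Measure X mX) : Set X :=
  {x | π x Set.univ = 1}

/-- `π` is `𝓔`-measurable: `π(·,F)` is `𝓔`-measurable for each `mX`-measurable `F`. -/
def EMeasK (mX 𝓔 : MeasurableSpace X) (π : X → @Measure X mX) : Prop :=
  ∀ F : Set X, MeasurableSet[mX] F → Measurable[𝓔] fun x => π x F

/-- `J_𝓔(π)`: the set of probability measures `μ` on `(X, mX)` with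
`μ(E ∩ F) = ∫_E π(·,F) dμ` for all `E ∈ 𝓔` and `F ∈ mX`. -/
def J (mX 𝓔 : MeasurableSpace X) (π : X → @Measure X mX) : Set (@Measure X mX) :=
  {μ | IsProbabilityMeasure μ ∧ ∀ E F : Set X, MeasurableSet[𝓔] E → MeasurableSet[mX] F →
      μ (E ∩ F) = ∫⁻ x in E, π x F ∂μ}

/-- `J_⋆(π)`: the set of probability measures `μ` on `(X, mX)` with
`μ(F) = ∫ π(·,F) dμ` for all `F ∈ mX`. -/
def Jstar (mX : MeasurableSpace X) (π : X → @Measure X mX) : Set (@Measure X mX) :=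
  {μ | IsProbabilityMeasure μ ∧ ∀ F : Set X, MeasurableSet[mX] F → μ F = ∫⁻ x, π x F ∂μ}

/-- `π` is proper as an `𝓔`-measurable kernel: `π(x, E ∩ F) = 1_E(x)·π(x,F)` for all
`E ∈ 𝓔`, `F ∈ mX` and `x ∈ X`. -/
def IsProperK (mX 𝓔 : MeasurableSpace X) (π : X → @Measure X mX) : Prop :=
  ∀ E F : Set X, MeasurableSet[𝓔] E → MeasurableSet[mX] F → ∀ x : X,
    π x (E ∩ F) = Set.indicator E (fun _ => π x F) x

/-- `μ` is trivial on `𝓔` if `μ(E) ∈ {0,1}` for every `E ∈ 𝓔`. -/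
def IsTrivialOn (mX 𝓔 : MeasurableSpace X) (μ : @Measure X mX) : Prop :=
  ∀ E : Set X, MeasurableSet[𝓔] E → μ E = 0 ∨ μ E = 1

/-- `π` is adapted if `π(x,·) ∈ J_𝓔(π)` for every `x ∈ S_π`. -/
def IsAdaptedK (mX 𝓔 : MeasurableSpace X) (π : X → @Measure X mX) : Prop :=
  ∀ x ∈ qpkSupp mX π, π x ∈ J mX 𝓔 π

/-- `π` is normal if it is adapted and `π(x,·)` is trivial on `𝓔` for every `x ∈ S_π`. -/
def IsNormalK (mX 𝓔 : MeasurableSpace X) (π : X → @Measure X mX) : Prop :=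
  IsAdaptedK mX 𝓔 π ∧ ∀ x ∈ qpkSupp mX π, IsTrivialOn mX 𝓔 (π x)

/-- The restriction of `π` to `D`: the kernel `ρ(x,F) = 1_D(x)·π(x,F)`. -/
noncomputable def kerRestrict (mX : MeasurableSpace X) (π : X → @Measure X mX) (D : Set X) :
    X → @Measure X mX :=
  Set.indicator D π

/-- `ρ` is a refinement of `π`: an `𝓔`-measurable quasi-probability kernel which is the
restriction of `π` to some `D ∈ 𝓔` and satisfies `J_𝓔(ρ) = J_𝓔(π)`. -/
def IsRefinement (mX 𝓔 : MeasurableSpace X) (π ρ : X → @Measure X mX) : Prop :=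
  IsQPK mX ρ ∧ EMeasK mX 𝓔 ρ ∧ (∃ D : Set X, MeasurableSet[𝓔] D ∧ ρ = kerRestrict mX π D) ∧
    J mX 𝓔 ρ = J mX 𝓔 π

/-- `Δ^π_μ = {x ∈ S_π : π(x,·) = μ}`. -/
def DeltaM (mX : MeasurableSpace X) (π : X → @Measure X mX) (μ : @Measure X mX) : Set X :=
  {x ∈ qpkSupp mX π | π x = μ}

/-- `Δ^π_x = {y ∈ S_π : π(y,·) = π(x,·)}`. -/
def Delta (mX : MeasurableSpace X) (π : X → @Measure X mX) (x : X) : Set X :=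
  {y ∈ qpkSupp mX π | π y = π x}

/-- `𝓝_π`: the σ-algebra of `mX`-measurable sets `N` such that for every `x ∈ S_π` either
`Δ^π_x ⊆ N` or `Δ^π_x ∩ N = ∅`. -/
def NSigma (mX : MeasurableSpace X) (π : X → @Measure X mX) : MeasurableSpace X where
  MeasurableSet' N := MeasurableSet[mX] N ∧
    ∀ x ∈ qpkSupp mX π, Delta mX π x ⊆ N ∨ Delta mX π x ∩ N = ∅
  measurableSet_empty :=
    ⟨@MeasurableSet.empty X mX, fun _ _ => Or.inr (Set.inter_empty _)⟩
  measurableSet_compl := by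
    rintro N ⟨hN, h⟩
    refine ⟨hN.compl, fun x hx => ?_⟩
    rcases h x hx with h1 | h1
    · refine Or.inr ?_
      ext y
      simp only [Set.mem_inter_iff, Set.mem_compl_iff, Set.mem_empty_iff_false, iff_false,
        not_and, not_not]
      exact fun hy => h1 hy
    · exact Or.inl fun y hy hyN => (Set.eq_empty_iff_forall_notMem.1 h1) y ⟨hy, hyN⟩
  measurableSet_iUnion := by
    intro f hf
    refine ⟨MeasurableSet.iUnion fun i => (hf i).1, fun x hx => ?_⟩
    by_cases hc : ∃ i, Delta mX π x ⊆ f i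
    · rcases hc with ⟨i, hi⟩
      exact Or.inl (hi.trans (Set.subset_iUnion f i))
    · push_neg at hc
      refine Or.inr ?_
      ext y
      simp only [Set.mem_inter_iff, Set.mem_iUnion, Set.mem_empty_iff_false, iff_false, not_and]
      rintro hy ⟨i, hyi⟩
      rcases (hf i).2 x hx with h1 | h1
      · exact hc i h1
      · exact (Set.eq_empty_iff_forall_notMem.1 h1) y ⟨hy, hyi⟩

/-- `𝓢_π`: the least σ-algebra making all the functions `π(·,F)`, `F ∈ mX`, measurable,
i.e. the σ-algebra generated by these functions. -/
def Spi (mX : MeasurableSpace X) (π : X → @Measure X mX) : MeasurableSpace X :=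
  ⨆ F ∈ {F : Set X | MeasurableSet[mX] F},
    MeasurableSpace.comap (fun x => π x F) inferInstance

/-!
A measure `μ ∈ J_⋆(π)` is exactly a fixed point `μ.bind π = μ`. As `π(x, X) ≤ 1` and
`∫ π(·, X) dμ = 1`, `μ`-almost every `x` lies in `S_π`, where adaptedness gives
`π(x, E ∩ F) = ∫_E π(·, F) dπ(x, ·)`. Integrating this in `x` against `μ` and using
`μ.bind π = μ` yields `μ(E ∩ F) = ∫_E π(·, F) dμ`.
-/

section

variable {𝓔 : MeasurableSpace X} [mX : MeasurableSpace X] {π : X → Measure X} {μ : Measure X}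

theorem IsQPK.measurable (hπ : IsQPK mX π) : Measurable π :=
  Measure.measurable_of_measurable_coe π hπ.1

theorem IsQPK.apply_univ_le_one (hπ : IsQPK mX π) (x : X) : π x Set.univ ≤ 1 := by
  rcases hπ.2 x with h | h <;> simp [h]

theorem J_subset_Jstar : J mX 𝓔 π ⊆ Jstar mX π :=
  fun _ ⟨hprob, h⟩ => ⟨hprob, fun F hF => by simpa using h Set.univ F MeasurableSet.univ hF⟩

theorem bind_eq_self_of_mem_Jstar (hπ : Measurable π) (hμ : μ ∈ Jstar mX π) : μ.bind π = μ := by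
  ext s hs
  rw [Measure.bind_apply hs hπ.aemeasurable, hμ.2 s hs]

theorem ae_mem_qpkSupp_of_mem_Jstar (hle : ∀ x, π x Set.univ ≤ 1) (hμ : μ ∈ Jstar mX π) :
    ∀ᵐ x ∂μ, x ∈ qpkSupp mX π := by
  have := hμ.1
  have hmass : ∫⁻ x, π x Set.univ ∂μ = 1 := by rw [← hμ.2 _ MeasurableSet.univ, measure_univ]
  exact ae_eq_of_ae_le_of_lintegral_le (.of_forall hle) (by simp [hmass]) aemeasurable_const
    (by simp [hmass])

theorem mem_J_of_mem_Jstar (h𝓔 : 𝓔 ≤ mX) (hπ : IsQPK mX π) (had : IsAdaptedK mX 𝓔 π)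
    (hμ : μ ∈ Jstar mX π) : μ ∈ J mX 𝓔 π := by
  refine ⟨hμ.1, fun E F hE hF => ?_⟩
  have hEm : MeasurableSet E := h𝓔 E hE
  have hind : Measurable (E.indicator fun y => π y F) := (hπ.1 F hF).indicator hEm
  calc μ (E ∩ F) = ∫⁻ x, π x (E ∩ F) ∂μ := hμ.2 _ (hEm.inter hF)
    _ = ∫⁻ x, ∫⁻ y, E.indicator (fun y => π y F) y ∂π x ∂μ := by
        refine lintegral_congr_ae ?_
        filter_upwards [ae_mem_qpkSupp_of_mem_Jstar hπ.apply_univ_le_one hμ] with x hx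
        rw [(had x hx).2 E F hE hF, lintegral_indicator hEm]
    _ = ∫⁻ y, E.indicator (fun y => π y F) y ∂μ.bind π :=
        (Measure.lintegral_bind hπ.measurable.aemeasurable hind.aemeasurable).symm
    _ = ∫⁻ y in E, π y F ∂μ := by
        rw [bind_eq_self_of_mem_Jstar hπ.measurable hμ, lintegral_indicator hEm]

end

theorem stmt2_general (mX : MeasurableSpace X)
    (𝓔 : MeasurableSpace X) (h𝓔 : 𝓔 ≤ mX)
    (π : X → @Measure X mX) (hπ : IsQPK mX π)
    (had : IsAdaptedK mX 𝓔 π) :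
    J mX 𝓔 π = Jstar mX π :=
  (J_subset_Jstar (mX := mX)).antisymm fun _ => mem_J_of_mem_Jstar (mX := mX) h𝓔 hπ had

/-- if `π` is adapted then `J_𝓔(π) = J_⋆(π)`. -/
theorem stmt2 (mX : MeasurableSpace X) (hCG : @MeasurableSpace.CountablyGenerated X mX)
    (𝓔 : MeasurableSpace X) (h𝓔 : 𝓔 ≤ mX)
    (π : X → @Measure X mX) (hπ : IsQPK mX π) (hπE : EMeasK mX 𝓔 π)
    (had : IsAdaptedK mX 𝓔 π) :
    J mX 𝓔 π = Jstar mX π :=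
  stmt2_general mX 𝓔 h𝓔 π hπ had
end

section
/- If the sub-σ-algebra 𝓔 is countably generated, then every 𝓔-measurable quasi-probability kernel π admits a proper 𝓔-measurable refinement ρ. -/
open MeasureTheory
open scoped ENNReal

variable {X : Type*}

/-!
Pick a countable family `b` generating `𝓔` and containing `X`, and let `D` be the set of points
`x` at which `π(x,·)` agrees with the Dirac mass `δ_x` on `b`; it lies in `𝓔` because `b` is
countable and `π` is `𝓔`-measurable. The sets on which a probability measure agrees with `δ_x`
form a σ-algebra, so for `x ∈ D` the measure `π(x,·)` agrees with `δ_x` on all of `𝓔`, and this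
is exactly properness of the restriction of `π` to `D`. Conversely, every `μ ∈ J_𝓔(π)` satisfies
`π(·,E) = 1_E` `μ`-a.e. for each `E ∈ 𝓔`, hence, by countability of `b`, is concentrated on `D`;
so restricting `π` to `D` does not change `J_𝓔`.
-/

section DiracMass

variable {m : MeasurableSpace X} (ν : Measure X) [IsProbabilityMeasure ν] {x : X}

lemma measure_eq_indicator_of_generateFrom {b : Set (Set X)} (hb : ∀ S ∈ b, MeasurableSet S)
    (h : ∀ S ∈ b, ν S = S.indicator 1 x) {E : Set X}
    (hE : MeasurableSet[MeasurableSpace.generateFrom b] E) : ν E = E.indicator 1 x := by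
  induction E, hE using MeasurableSpace.generateFrom_induction with
  | hC S hS _ => exact h S hS
  | empty => simp
  | compl t ht ih =>
    rw [prob_compl_eq_one_sub (MeasurableSpace.generateFrom_le hb t ht), ih]
    by_cases hxt : x ∈ t <;> simp [hxt]
  | iUnion s _ ih =>
    by_cases hx : ∃ n, x ∈ s n
    · obtain ⟨n, hn⟩ := hx
      have hsn : ν (s n) = 1 := by simp [ih n, hn]
      rw [Set.indicator_of_mem (Set.mem_iUnion.2 ⟨n, hn⟩), Pi.one_apply]
      exact le_antisymm prob_le_one (hsn.symm.le.trans (measure_mono (Set.subset_iUnion s n)))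
    · push Not at hx
      rw [Set.indicator_of_notMem (by simpa using hx),
        measure_iUnion_null fun n => by simp [ih n, hx n]]

lemma measure_inter_eq_indicator {E : Set X} (hE : MeasurableSet E) (h : ν E = E.indicator 1 x)
    (F : Set X) : ν (E ∩ F) = E.indicator (fun _ => ν F) x := by
  by_cases hxE : x ∈ E
  · rw [Set.indicator_of_mem hxE, Set.inter_comm, measure_inter_conull]
    rw [prob_compl_eq_zero_iff hE, h, Set.indicator_of_mem hxE, Pi.one_apply]
  · rw [Set.indicator_of_notMem hxE]
    exact measure_inter_null_of_null_left F (by simp [h, hxE])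

end DiracMass

lemma ae_restrict_eq_one_of_setLIntegral_eq {m : MeasurableSpace X} {μ : Measure X}
    {f : X → ℝ≥0∞} {E : Set X} (hf : ∀ x, f x ≤ 1) (hμE : μ E ≠ ∞)
    (h : ∫⁻ x in E, f x ∂μ = μ E) : ∀ᵐ x ∂μ.restrict E, f x = 1 :=
  ae_eq_of_ae_le_of_lintegral_le (g := fun _ => 1) (.of_forall hf) (h ▸ hμE) aemeasurable_const
    (by simp [h])

section Kernel

variable {mX 𝓔 : MeasurableSpace X} {π : X → @Measure X mX}

lemma IsQPK.apply_le_one (hπ : IsQPK mX π) (x : X) (F : Set X) : π x F ≤ 1 :=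
  (measure_mono (Set.subset_univ F)).trans <| by rcases hπ.2 x with h | h <;> simp [h]

lemma kerRestrict_apply (π : X → @Measure X mX) (D : Set X) (x : X) (F : Set X) :
    kerRestrict mX π D x F = D.indicator (fun y => π y F) x := by
  by_cases h : x ∈ D <;> simp [kerRestrict, h]

lemma isQPK_kerRestrict (hπ : IsQPK mX π) {D : Set X} (hD : MeasurableSet[mX] D) :
    IsQPK mX (kerRestrict mX π D) := by
  refine ⟨fun F hF => ?_, fun x => ?_⟩
  · simp_rw [kerRestrict_apply]
    exact (hπ.1 F hF).indicator hD
  · by_cases hx : x ∈ D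
    · rw [kerRestrict_apply, Set.indicator_of_mem hx]
      exact hπ.2 x
    · simp [kerRestrict_apply, hx]

lemma eMeasK_kerRestrict (hπE : EMeasK mX 𝓔 π) {D : Set X} (hD : MeasurableSet[𝓔] D) :
    EMeasK mX 𝓔 (kerRestrict mX π D) := fun F hF => by
  simp_rw [kerRestrict_apply]
  exact (hπE F hF).indicator hD

lemma ae_apply_eq_indicator_of_mem_J (h𝓔 : 𝓔 ≤ mX) (hπ : IsQPK mX π) {μ : @Measure X mX}
    (hμ : μ ∈ J mX 𝓔 π) {E : Set X} (hE : MeasurableSet[𝓔] E) :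
    ∀ᵐ x ∂μ, π x E = E.indicator 1 x := by
  obtain ⟨_, hμJ⟩ := hμ
  have hEm := h𝓔 E hE
  have h_on : ∀ᵐ x ∂μ.restrict E, π x E = 1 :=
    ae_restrict_eq_one_of_setLIntegral_eq (fun x => hπ.apply_le_one x E) (measure_ne_top μ E)
      (by rw [← hμJ E E hE hEm, Set.inter_self])
  have h_off : ∀ᵐ x ∂μ, x ∈ Eᶜ → π x E = 0 :=
    (setLIntegral_eq_zero_iff hEm.compl (hπ.1 E hEm)).mp
      (by rw [← hμJ Eᶜ E hE.compl hEm, Set.compl_inter_self, measure_empty])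
  filter_upwards [(ae_restrict_iff' hEm).1 h_on, h_off]
    with x h1 h0
  by_cases hx : x ∈ E
  · simp [h1 hx, hx]
  · simp [h0 hx, hx]

lemma J_kerRestrict (h𝓔 : 𝓔 ≤ mX) (hπ : IsQPK mX π) {D : Set X} (hD : MeasurableSet[mX] D)
    (hconc : ∀ μ ∈ J mX 𝓔 π, ∀ᵐ x ∂μ, x ∈ D) : J mX 𝓔 (kerRestrict mX π D) = J mX 𝓔 π := by
  have hJ_iff : ∀ μ : @Measure X mX, (∀ᵐ x ∂μ, x ∈ D) →
      (μ ∈ J mX 𝓔 (kerRestrict mX π D) ↔ μ ∈ J mX 𝓔 π) := by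
    intro μ hμD
    have hint : ∀ E F, ∫⁻ x in E, kerRestrict mX π D x F ∂μ = ∫⁻ x in E, π x F ∂μ :=
      fun E F => lintegral_congr_ae <| ae_restrict_of_ae <| hμD.mono fun x hx => by
        simp only [kerRestrict_apply, Set.indicator_of_mem hx]
    simp only [J, Set.mem_ofPred_eq, hint]
  ext μ
  refine ⟨fun hμ => (hJ_iff μ ?_).1 hμ, fun hμ => (hJ_iff μ (hconc μ hμ)).2 hμ⟩
  filter_upwards [ae_apply_eq_indicator_of_mem_J h𝓔 (isQPK_kerRestrict hπ hD) hμ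
    MeasurableSet.univ] with x hx
  by_contra hxD
  simp [kerRestrict_apply, hxD] at hx

lemma isProperK_kerRestrict (h𝓔 : 𝓔 ≤ mX) {D : Set X}
    (hdirac : ∀ x ∈ D, ∀ E, MeasurableSet[𝓔] E → π x E = E.indicator 1 x) :
    IsProperK mX 𝓔 (kerRestrict mX π D) := by
  intro E F hE _ x
  by_cases hxD : x ∈ D
  · have : IsProbabilityMeasure (π x) := ⟨by simpa using hdirac x hxD _ MeasurableSet.univ⟩
    simp only [kerRestrict_apply, Set.indicator_of_mem hxD]
    exact measure_inter_eq_indicator (π x) (h𝓔 E hE) (hdirac x hxD E hE) F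
  · simp [kerRestrict_apply, hxD]

def diracLocus (π : X → @Measure X mX) (b : Set (Set X)) : Set X :=
  {x | ∀ S ∈ b, π x S = S.indicator 1 x}

variable {b : Set (Set X)}

lemma measurableSet_diracLocus (h𝓔 : 𝓔 ≤ mX) (hπE : EMeasK mX 𝓔 π) (hb : b.Countable)
    (hbE : ∀ S ∈ b, MeasurableSet[𝓔] S) : MeasurableSet[𝓔] (diracLocus π b) := by
  simp only [diracLocus, Set.ofPred_forall]
  exact .biInter hb fun S hS =>
    measurableSet_eq_fun (hπE S (h𝓔 S (hbE S hS))) (measurable_const.indicator (hbE S hS))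

lemma ae_mem_diracLocus_of_mem_J (h𝓔 : 𝓔 ≤ mX) (hπ : IsQPK mX π) (hb : b.Countable)
    (hbE : ∀ S ∈ b, MeasurableSet[𝓔] S) {μ : @Measure X mX} (hμ : μ ∈ J mX 𝓔 π) :
    ∀ᵐ x ∂μ, x ∈ diracLocus π b :=
  (ae_ball_iff hb).2 fun S hS => ae_apply_eq_indicator_of_mem_J h𝓔 hπ hμ (hbE S hS)

lemma apply_eq_indicator_of_mem_diracLocus (h𝓔 : 𝓔 ≤ mX)
    (h𝓔b : 𝓔 = MeasurableSpace.generateFrom b) (huniv : Set.univ ∈ b) {x : X}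
    (hx : x ∈ diracLocus π b) {E : Set X} (hE : MeasurableSet[𝓔] E) :
    π x E = E.indicator 1 x := by
  have : IsProbabilityMeasure (π x) := ⟨by simpa using hx Set.univ huniv⟩
  subst h𝓔b
  exact measure_eq_indicator_of_generateFrom (π x)
    (fun S hS => h𝓔 S (MeasurableSpace.measurableSet_generateFrom hS)) hx hE

end Kernel

theorem stmt4_general (mX : MeasurableSpace X)
    (𝓔 : MeasurableSpace X) (h𝓔 : 𝓔 ≤ mX)
    (hcg𝓔 : @MeasurableSpace.CountablyGenerated X 𝓔)
    (π : X → @Measure X mX) (hπ : IsQPK mX π) (hπE : EMeasK mX 𝓔 π) :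
    ∃ ρ : X → @Measure X mX, IsRefinement mX 𝓔 π ρ ∧ IsProperK mX 𝓔 ρ := by
  obtain ⟨b₀, hb₀, h𝓔b₀⟩ := hcg𝓔.isCountablyGenerated
  set b := insert Set.univ b₀
  have hb : b.Countable := hb₀.insert _
  have h𝓔b : 𝓔 = MeasurableSpace.generateFrom b := by
    rw [h𝓔b₀, MeasurableSpace.generateFrom_insert_univ]
  have hbE : ∀ S ∈ b, MeasurableSet[𝓔] S := fun S hS =>
    h𝓔b ▸ MeasurableSpace.measurableSet_generateFrom hS
  set D := diracLocus π b
  have hDE : MeasurableSet[𝓔] D := measurableSet_diracLocus h𝓔 hπE hb hbE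
  refine ⟨kerRestrict mX π D, ⟨isQPK_kerRestrict hπ (h𝓔 D hDE), eMeasK_kerRestrict hπE hDE,
    ⟨D, hDE, rfl⟩, J_kerRestrict h𝓔 hπ (h𝓔 D hDE) fun μ hμ => ?_⟩, ?_⟩
  · exact ae_mem_diracLocus_of_mem_J h𝓔 hπ hb hbE hμ
  · exact isProperK_kerRestrict h𝓔 fun x hx E hE =>
      apply_eq_indicator_of_mem_diracLocus h𝓔 h𝓔b (Set.mem_insert _ _) hx hE

/-- if `𝓔` is countably generated, every `𝓔`-measurable quasi-probability
kernel admits a proper `𝓔`-measurable refinement. -/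
theorem stmt4 (mX : MeasurableSpace X) (hCG : @MeasurableSpace.CountablyGenerated X mX)
    (𝓔 : MeasurableSpace X) (h𝓔 : 𝓔 ≤ mX)
    (hcg𝓔 : @MeasurableSpace.CountablyGenerated X 𝓔)
    (π : X → @Measure X mX) (hπ : IsQPK mX π) (hπE : EMeasK mX 𝓔 π) :
    ∃ ρ : X → @Measure X mX, IsRefinement mX 𝓔 π ρ ∧ IsProperK mX 𝓔 ρ :=
  stmt4_general mX 𝓔 h𝓔 hcg𝓔 π hπ hπE
end

section
/- Let π be an 𝓔-measurable quasi-probability kernel. If μ ∈ J_𝓔(π) is trivial on 𝓔, then μ = π(x,·) for some x ∈ S_π. -/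
open MeasureTheory
open scoped ENNReal

variable {X : Type*}

/-!
For each measurable `F`, the function `π(·,F)` is `𝓔`-measurable and `μ` is `0`-`1` valued on
`𝓔`, so `π(·,F)` is `μ`-a.e. constant; taking `E = X` in the identity defining `J_𝓔(π)` shows
that the constant is `μ(F)`. Since `𝓕` is generated by a countable π-system, for `μ`-a.e. `x`
the measures `π(x,·)` and `μ` agree on that π-system and on `X`, hence coincide.
-/

open Filter

theorem countable_generatePiSystem {α : Type*} {C : Set (Set α)} (hC : C.Countable) :
    (generatePiSystem C).Countable := by
  refine ((Set.countable_ofPred_finite_subset hC).image fun t => ⋂₀ t).mono fun s hs => ?_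
  induction hs with
  | base h =>
    exact ⟨{_}, ⟨Set.finite_singleton _, Set.singleton_subset_iff.2 h⟩, Set.sInter_singleton _⟩
  | inter _ _ _ ihs iht =>
    obtain ⟨u, ⟨hu, huC⟩, rfl⟩ := ihs
    obtain ⟨v, ⟨hv, hvC⟩, rfl⟩ := iht
    exact ⟨u ∪ v, ⟨hu.union hv, Set.union_subset huC hvC⟩, Set.sInter_union u v⟩

theorem MeasureTheory.Measure.eventually_eq_of_forall_eventually_apply_eq {α β : Type*}
    {mα : MeasurableSpace α} [MeasurableSpace.CountablyGenerated α]
    {μ : Measure α} [IsFiniteMeasure μ] {l : Filter β} [CountableInterFilter l] {κ : β → Measure α}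
    (h : ∀ s, MeasurableSet s → ∀ᶠ b in l, κ b s = μ s) : ∀ᶠ b in l, κ b = μ := by
  set S := generatePiSystem (MeasurableSpace.countableGeneratingSet α)
  have hS : S.Countable :=
    countable_generatePiSystem MeasurableSpace.countable_countableGeneratingSet
  have hgen : mα = MeasurableSpace.generateFrom S := by
    rw [generateFrom_generatePiSystem_eq, MeasurableSpace.generateFrom_countableGeneratingSet]
  have hSmeas : ∀ s ∈ S, MeasurableSet s := fun s hs =>
    hgen ▸ MeasurableSpace.measurableSet_generateFrom hs
  filter_upwards [h _ MeasurableSet.univ,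
    (eventually_countable_ball hS).2 fun s hs => h s (hSmeas s hs)] with b huniv hb
  exact (ext_of_generate_finite S hgen (isPiSystem_generatePiSystem _)
    (fun s hs => (hb s hs).symm) huniv.symm).symm

theorem IsTrivialOn.exists_ae_eq_const {mX 𝓔 : MeasurableSpace X} {μ : @Measure X mX}
    [IsProbabilityMeasure μ] (h𝓔 : 𝓔 ≤ mX) (hμ : IsTrivialOn mX 𝓔 μ)
    {β : Type*} [Nonempty β] [MeasurableSpace β] [MeasurableSpace.CountablySeparated β]
    {f : X → β} (hf : Measurable[𝓔] f) : ∃ c, f =ᵐ[μ] fun _ => c := by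
  refine exists_eventuallyEq_const_of_forall_separating MeasurableSet fun U hU => ?_
  rcases hμ _ (hf hU) with h0 | h1
  · exact Or.inr (measure_eq_zero_iff_ae_notMem.1 h0)
  · exact Or.inl (ae_iff.2 ((prob_compl_eq_zero_iff (h𝓔 _ (hf hU))).2 h1))

theorem ae_apply_eq_of_mem_J_of_isTrivialOn {mX 𝓔 : MeasurableSpace X} (h𝓔 : 𝓔 ≤ mX)
    {π : X → @Measure X mX} (hπE : EMeasK mX 𝓔 π) {μ : @Measure X mX} (hμ : μ ∈ J mX 𝓔 π)
    (htriv : IsTrivialOn mX 𝓔 μ) {F : Set X} (hF : MeasurableSet[mX] F) :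
    ∀ᵐ x ∂μ, π x F = μ F := by
  have := hμ.1
  obtain ⟨c, hc⟩ := htriv.exists_ae_eq_const h𝓔 (hπE F hF)
  have hμF : μ F = c := by
    calc μ F = ∫⁻ x in Set.univ, π x F ∂μ := by
          rw [← hμ.2 _ _ (@MeasurableSet.univ X 𝓔) hF, Set.univ_inter]
      _ = c := by
          rw [Measure.restrict_univ, lintegral_congr_ae hc, lintegral_const, measure_univ, mul_one]
  exact hμF ▸ hc

theorem stmt6_general (mX : MeasurableSpace X) (hCG : @MeasurableSpace.CountablyGenerated X mX)
    (𝓔 : MeasurableSpace X) (h𝓔 : 𝓔 ≤ mX)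
    (π : X → @Measure X mX) (hπE : EMeasK mX 𝓔 π)
    (μ : @Measure X mX) (hμ : μ ∈ J mX 𝓔 π) (htriv : IsTrivialOn mX 𝓔 μ) :
    ∃ x ∈ qpkSupp mX π, μ = π x := by
  have := hμ.1
  have hae : ∀ᵐ x ∂μ, π x = μ := Measure.eventually_eq_of_forall_eventually_apply_eq
    fun F hF => ae_apply_eq_of_mem_J_of_isTrivialOn h𝓔 hπE hμ htriv hF
  obtain ⟨x, hx⟩ := hae.exists
  exact ⟨x, show π x Set.univ = 1 by rw [hx, measure_univ], hx.symm⟩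

/-- if `μ ∈ J_𝓔(π)` is trivial on `𝓔` then `μ = π(x,·)` for some
`x ∈ S_π`. -/
theorem stmt6 (mX : MeasurableSpace X) (hCG : @MeasurableSpace.CountablyGenerated X mX)
    (𝓔 : MeasurableSpace X) (h𝓔 : 𝓔 ≤ mX)
    (π : X → @Measure X mX) (hπ : IsQPK mX π) (hπE : EMeasK mX 𝓔 π)
    (μ : @Measure X mX) (hμ : μ ∈ J mX 𝓔 π) (htriv : IsTrivialOn mX 𝓔 μ) :
    ∃ x ∈ qpkSupp mX π, μ = π x :=
  stmt6_general mX hCG 𝓔 h𝓔 π hπE μ hμ htriv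
end

section
/- An 𝓔-measurable quasi-probability kernel π is normal if and only if it is adapted and π(x, Δ^π_x) = 1 for all x ∈ S_π. -/
open MeasureTheory
open scoped ENNReal

variable {X : Type*}

/-!
If `μ ∈ J_𝓔(π)` is trivial on `𝓔`, every `𝓔`-measurable function `π(·,F)` is `μ`-a.e. constant,
and the constant is `∫ π(·,F) dμ = μ(F)`. Since a countably generated `σ`-algebra carries a
countable family of sets determining finite measures, `π(y,·) = μ` for `μ`-a.e. `y`. Conversely,
if `π(y,·) = μ` for `μ`-a.e. `y`, then `μ(E) = μ(E ∩ E) = ∫_E π(·,E) dμ = μ(E)²` for `E ∈ 𝓔`.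
For `μ = π(x,·)` with `x ∈ S_π`, "`π(y,·) = μ` for `μ`-a.e. `y`" says exactly `π(x, Δ^π_x) = 1`.
-/

theorem Set.Countable.generatePiSystem {α : Type*} {S : Set (Set α)} (hS : S.Countable) :
    (generatePiSystem S).Countable := by
  refine ((Set.countable_ofPred_finite_subset hS).image Set.sInter).mono fun t ht => ?_
  induction ht with
  | base h => exact ⟨{_}, ⟨Set.finite_singleton _, by simpa⟩, by simp⟩
  | inter _ _ _ ihs iht =>
    obtain ⟨T₁, ⟨hT₁f, hT₁S⟩, rfl⟩ := ihs
    obtain ⟨T₂, ⟨hT₂f, hT₂S⟩, rfl⟩ := iht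
    exact ⟨T₁ ∪ T₂, ⟨hT₁f.union hT₂f, Set.union_subset hT₁S hT₂S⟩, Set.sInter_union T₁ T₂⟩

theorem MeasurableSpace.CountablyGenerated.exists_countable_determining
    {mX : MeasurableSpace X} (hCG : @MeasurableSpace.CountablyGenerated X mX) :
    ∃ C : Set (Set X), C.Countable ∧ (∀ F ∈ C, MeasurableSet[mX] F) ∧
      ∀ μ ν : @Measure X mX, IsFiniteMeasure μ → (∀ F ∈ C, μ F = ν F) → μ = ν := by
  obtain ⟨b, hbc, hb⟩ := hCG.isCountablyGenerated
  refine ⟨insert Set.univ (generatePiSystem b), hbc.generatePiSystem.insert _, ?_, ?_⟩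
  · rintro F (rfl | hF)
    · exact MeasurableSet.univ
    · exact hb ▸ generateFrom_measurableSet_of_generatePiSystem F hF
  · intro μ ν _ hμν
    exact ext_of_generate_finite _ (hb.trans generateFrom_generatePiSystem_eq.symm)
      (isPiSystem_generatePiSystem b) (fun F hF => hμν F (Or.inr hF)) (hμν _ (Or.inl rfl))

section Kernel

variable {mX 𝓔 : MeasurableSpace X} {π : X → @Measure X mX}

theorem measurableSet_setOf_kernel_eq (hCG : @MeasurableSpace.CountablyGenerated X mX)
    (hπE : EMeasK mX 𝓔 π) (μ : @Measure X mX) [IsFiniteMeasure μ] :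
    MeasurableSet[𝓔] {y | π y = μ} := by
  obtain ⟨C, hCc, hCm, hext⟩ := hCG.exists_countable_determining
  have hrepr : {y | π y = μ} = ⋂ F ∈ C, {y | π y F = μ F} := by
    ext y
    simp only [Set.mem_ofPred_eq, Set.mem_iInter]
    exact ⟨fun hy F _ => hy ▸ rfl, fun hy => (hext μ (π y) ‹_› fun F hF => (hy F hF).symm).symm⟩
  rw [hrepr]
  exact MeasurableSet.biInter hCc fun F hF => hπE F (hCm F hF) (measurableSet_singleton _)

theorem lintegral_kernel_eq_of_mem_J {μ : @Measure X mX} (hμ : μ ∈ J mX 𝓔 π) {F : Set X}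
    (hF : MeasurableSet[mX] F) : ∫⁻ y, π y F ∂μ = μ F := by
  simpa using (hμ.2 Set.univ F MeasurableSet.univ hF).symm

theorem IsTrivialOn.ae_eq_const {β : Type*} [MeasurableSpace β] [Nonempty β]
    [MeasurableSpace.CountablySeparated β] (h𝓔 : 𝓔 ≤ mX) {μ : @Measure X mX}
    [IsProbabilityMeasure μ] (hμ : IsTrivialOn mX 𝓔 μ) {g : X → β} (hg : Measurable[𝓔] g) :
    ∃ c, g =ᵐ[μ] fun _ => c := by
  refine Filter.exists_eventuallyEq_const_of_forall_separating MeasurableSet fun U hU => ?_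
  rcases hμ _ (hg hU) with h0 | h1
  · exact Or.inr (measure_eq_zero_iff_ae_notMem.1 h0)
  · exact Or.inl ((ae_mem_iff_measure_eq (h𝓔 _ (hg hU)).nullMeasurableSet).2
      (h1.trans measure_univ.symm))

theorem ae_kernel_apply_eq_of_isTrivialOn (h𝓔 : 𝓔 ≤ mX) (hπE : EMeasK mX 𝓔 π)
    {μ : @Measure X mX} (hμ : μ ∈ J mX 𝓔 π) (htriv : IsTrivialOn mX 𝓔 μ) {F : Set X}
    (hF : MeasurableSet[mX] F) : ∀ᵐ y ∂μ, π y F = μ F := by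
  have := hμ.1
  obtain ⟨c, hc⟩ := htriv.ae_eq_const h𝓔 (hπE F hF)
  have hcF : c = μ F := by
    rw [← lintegral_kernel_eq_of_mem_J hμ hF, lintegral_congr_ae hc]
    simp
  exact hcF ▸ hc

theorem ae_kernel_eq_of_isTrivialOn (hCG : @MeasurableSpace.CountablyGenerated X mX)
    (h𝓔 : 𝓔 ≤ mX) (hπE : EMeasK mX 𝓔 π) {μ : @Measure X mX} (hμ : μ ∈ J mX 𝓔 π)
    (htriv : IsTrivialOn mX 𝓔 μ) : ∀ᵐ y ∂μ, π y = μ := by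
  have := hμ.1
  obtain ⟨C, hCc, hCm, hext⟩ := hCG.exists_countable_determining
  have hC : ∀ᵐ y ∂μ, ∀ F ∈ C, π y F = μ F :=
    (ae_ball_iff hCc).2 fun F hF => ae_kernel_apply_eq_of_isTrivialOn h𝓔 hπE hμ htriv (hCm F hF)
  filter_upwards [hC] with y hy
  exact (hext μ (π y) inferInstance fun F hF => (hy F hF).symm).symm

theorem isTrivialOn_of_ae_kernel_eq (h𝓔 : 𝓔 ≤ mX) {μ : @Measure X mX} (hμ : μ ∈ J mX 𝓔 π)
    (hae : ∀ᵐ y ∂μ, π y = μ) : IsTrivialOn mX 𝓔 μ := by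
  have := hμ.1
  intro E hE
  have hsq : μ E * μ E = μ E :=
    calc μ E * μ E = ∫⁻ _ in E, μ E ∂μ := (setLIntegral_const E _).symm
      _ = ∫⁻ y in E, π y E ∂μ := lintegral_congr_ae (ae_restrict_of_ae (hae.mono fun y hy => by
          simp only [hy]))
      _ = μ (E ∩ E) := (hμ.2 E E hE (h𝓔 E hE)).symm
      _ = μ E := by rw [Set.inter_self]
  rcases eq_or_ne (μ E) 0 with h0 | h0
  · exact Or.inl h0
  · exact Or.inr ((ENNReal.mul_eq_left h0 (measure_ne_top μ E)).1 hsq)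

theorem isTrivialOn_iff_ae_kernel_eq (hCG : @MeasurableSpace.CountablyGenerated X mX)
    (h𝓔 : 𝓔 ≤ mX) (hπE : EMeasK mX 𝓔 π) {μ : @Measure X mX} (hμ : μ ∈ J mX 𝓔 π) :
    IsTrivialOn mX 𝓔 μ ↔ ∀ᵐ y ∂μ, π y = μ :=
  ⟨ae_kernel_eq_of_isTrivialOn hCG h𝓔 hπE hμ, isTrivialOn_of_ae_kernel_eq h𝓔 hμ⟩

theorem delta_eq_setOf_kernel_eq {x : X} (hx : x ∈ qpkSupp mX π) :
    Delta mX π x = {y | π y = π x} :=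
  Set.sep_eq_of_subset fun y (hy : π y = π x) => show π y Set.univ = 1 from hy ▸ hx

theorem measure_delta_eq_one_iff (hCG : @MeasurableSpace.CountablyGenerated X mX)
    (h𝓔 : 𝓔 ≤ mX) (hπE : EMeasK mX 𝓔 π) {x : X} (hx : x ∈ qpkSupp mX π) :
    π x (Delta mX π x) = 1 ↔ ∀ᵐ y ∂(π x), π y = π x := by
  have : IsProbabilityMeasure (π x) := ⟨hx⟩
  rw [delta_eq_setOf_kernel_eq hx, ae_iff_measure_eq
    (h𝓔 _ (measurableSet_setOf_kernel_eq hCG hπE (π x))).nullMeasurableSet, measure_univ]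

end Kernel

theorem stmt7_general (mX : MeasurableSpace X) (hCG : @MeasurableSpace.CountablyGenerated X mX)
    (𝓔 : MeasurableSpace X) (h𝓔 : 𝓔 ≤ mX)
    (π : X → @Measure X mX) (hπE : EMeasK mX 𝓔 π) :
    IsNormalK mX 𝓔 π ↔
      (IsAdaptedK mX 𝓔 π ∧ ∀ x ∈ qpkSupp mX π, π x (Delta mX π x) = 1) :=
  and_congr_right fun hAd => forall₂_congr fun x hx => by
    rw [isTrivialOn_iff_ae_kernel_eq hCG h𝓔 hπE (hAd x hx), measure_delta_eq_one_iff hCG h𝓔 hπE hx]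

/-- `π` is normal iff it is adapted and `π(x, Δ^π_x) = 1` for all
`x ∈ S_π`. -/
theorem stmt7 (mX : MeasurableSpace X) (hCG : @MeasurableSpace.CountablyGenerated X mX)
    (𝓔 : MeasurableSpace X) (h𝓔 : 𝓔 ≤ mX)
    (π : X → @Measure X mX) (hπ : IsQPK mX π) (hπE : EMeasK mX 𝓔 π) :
    IsNormalK mX 𝓔 π ↔
      (IsAdaptedK mX 𝓔 π ∧ ∀ x ∈ qpkSupp mX π, π x (Delta mX π x) = 1) :=
  stmt7_general mX hCG 𝓔 h𝓔 π hπE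
end
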